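/- arXiv:cs/0701097 — 5 statements merged into one kernel-verified Lean document; each statement's English description precedes it below -/
import Mathlib

section
/- Let a(x,y;m) = x + (q^m−1)y, a homogeneous polynomial of degree 1 with coefficients a_0(m) = 1 and a_1(m) = q^m−1. For every l ≥ 0, the coefficient of y^u x^{l−u} in the l-th q-power a(x,y;m)^{[l]} equals [l,u]_q · α(m,u) for all 0 ≤ u ≤ l; that is, [x+(q^m−1)y]^{[l]} = Σ_{u=0}^{l} [l,u]_q α(m,u) y^u x^{l−u}. -/
open Finset

/-- `α(m,u) = ∏_{i=0}^{u-1} (q^m - q^i)`, with `q^m` the real power (integer exponent `m`). -/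
noncomputable def alphaR (q : ℝ) (m : ℤ) (u : ℕ) : ℝ :=
  ∏ i ∈ Finset.range u, (q ^ m - q ^ (i : ℤ))

/-- Gaussian binomial `[n,u]_q = α(n,u)/α(u,u)` (which is `0` when `u > n`). -/
noncomputable def gaussR (q : ℝ) (n u : ℕ) : ℝ :=
  alphaR q n u / alphaR q u u

/-- A homogeneous polynomial in `x,y` with integer parameter `m` is modelled by its
family of coefficients `f m i` (the coefficient of `y^i x^{deg - i}`).
The `q`-product of `f` (degree `r`) and `g` (degree `s`) has coefficients
`c_u(m) = Σ_{i=0}^u q^{i·s} f_i(m) g_{u-i}(m-i)`. -/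
noncomputable def qmulCoeff (q : ℝ) (s : ℕ) (f g : ℤ → ℕ → ℝ) : ℤ → ℕ → ℝ :=
  fun m u => ∑ i ∈ Finset.range (u + 1), q ^ (i * s) * f m i * g (m - i) (u - i)

/-- The `l`-th `q`-power of a degree-1 homogeneous polynomial `a`:
`a^{[0]} = 1` and `a^{[l]} = a^{[l-1]} * a`. -/
noncomputable def qpowCoeff (q : ℝ) (a : ℤ → ℕ → ℝ) : ℕ → ℤ → ℕ → ℝ
  | 0 => fun _ u => if u = 0 then 1 else 0
  | l + 1 => qmulCoeff q 1 (qpowCoeff q a l) a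

/-!
Both sides satisfy the same recursion in `l`. Multiplying by `x + (q^m - 1) y` gives
`P_{l+1}(m, u+1) = q^u (q^{m-u} - 1) P_l(m, u) + q^{u+1} P_l(m, u+1)`, and since
`q^u (q^{m-u} - 1) α(m,u) = α(m,u+1)`, for `P_l(m,u) = [l,u]_q α(m,u)` this recursion is
exactly the `q`-Pascal rule `[l+1,u+1]_q = [l,u]_q + q^{u+1} [l,u+1]_q`.
-/

lemma alphaR_zero (q : ℝ) (m : ℤ) : alphaR q m 0 = 1 := prod_range_zero _

lemma alphaR_succ (q : ℝ) (m : ℤ) (u : ℕ) :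
    alphaR q m (u + 1) = alphaR q m u * (q ^ m - q ^ (u : ℤ)) :=
  prod_range_succ _ _

lemma alphaR_succ_succ {q : ℝ} (hq : q ≠ 0) (n : ℤ) (u : ℕ) :
    alphaR q (n + 1) (u + 1) = (q ^ (n + 1) - 1) * q ^ u * alphaR q n u := by
  have hfactor (i : ℕ) : q ^ (n + 1) - q ^ ((i + 1 : ℕ) : ℤ) = q * (q ^ n - q ^ (i : ℤ)) := by
    push_cast
    rw [zpow_add_one₀ hq, zpow_add_one₀ hq]
    ring
  rw [alphaR, prod_range_succ', alphaR]
  simp only [hfactor, prod_mul_distrib, prod_const, card_range]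
  norm_num
  ring

lemma gaussR_zero_right (q : ℝ) (n : ℕ) : gaussR q n 0 = 1 := by
  simp [gaussR, alphaR_zero]

lemma gaussR_of_lt (q : ℝ) {n u : ℕ} (h : n < u) : gaussR q n u = 0 := by
  have : alphaR q n u = 0 := prod_eq_zero (mem_range.2 h) (sub_self _)
  rw [gaussR, this, zero_div]

lemma gaussR_succ_right {q : ℝ} (hq : q ≠ 0) (n u : ℕ) :
    gaussR q n (u + 1) = (q ^ (n : ℤ) - q ^ (u : ℤ)) / ((q ^ ((u : ℤ) + 1) - 1) * q ^ u) *
      gaussR q n u := by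
  rw [gaussR, gaussR, alphaR_succ, Nat.cast_succ, alphaR_succ_succ hq, mul_comm, mul_div_mul_comm]

lemma gaussR_succ_succ {q : ℝ} (hq : q ≠ 0) (n u : ℕ) :
    gaussR q (n + 1) (u + 1) = (q ^ ((n : ℤ) + 1) - 1) / (q ^ ((u : ℤ) + 1) - 1) *
      gaussR q n u := by
  rw [gaussR, gaussR, Nat.cast_succ, Nat.cast_succ, alphaR_succ_succ hq, alphaR_succ_succ hq,
    mul_div_mul_comm, mul_div_mul_right _ _ (pow_ne_zero u hq)]

lemma gaussR_pascal {q : ℝ} (hq : 1 < q) (n u : ℕ) :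
    gaussR q (n + 1) (u + 1) = gaussR q n u + q ^ (u + 1) * gaussR q n (u + 1) := by
  have hq0 : q ≠ 0 := by positivity
  have hden : q ^ ((u : ℤ) + 1) - 1 ≠ 0 := (sub_pos.2 (one_lt_zpow₀ hq (by omega))).ne'
  rw [gaussR_succ_succ hq0, gaussR_succ_right hq0]
  simp only [zpow_add_one₀ hq0, zpow_natCast] at hden ⊢
  rw [div_mul_eq_mul_div, eq_comm, ← sub_eq_zero]
  field_simp
  ring

def linCoeff (c : ℤ → ℝ) : ℤ → ℕ → ℝ :=
  fun m i => if i = 0 then 1 else if i = 1 then c m else 0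

section QPower

variable (q : ℝ) (f : ℤ → ℕ → ℝ) (c : ℤ → ℝ) (m : ℤ)

lemma qmulCoeff_linCoeff_zero : qmulCoeff q 1 f (linCoeff c) m 0 = f m 0 := by
  simp [qmulCoeff, linCoeff]

lemma qmulCoeff_linCoeff_succ (u : ℕ) :
    qmulCoeff q 1 f (linCoeff c) m (u + 1) =
      q ^ u * f m u * c (m - u) + q ^ (u + 1) * f m (u + 1) := by
  have hlow : ∑ i ∈ range u, q ^ (i * 1) * f m i * linCoeff c (m - i) (u + 1 - i) = 0 :=
    sum_eq_zero fun i hi => by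
      have := mem_range.1 hi
      simp [linCoeff, show u + 1 - i ≠ 0 by omega, show u + 1 - i ≠ 1 by omega]
  rw [qmulCoeff, sum_range_succ, sum_range_succ, hlow]
  simp [linCoeff]

end QPower

theorem qpowCoeff_linCoeff_zpow_sub_one {q : ℝ} (hq : 1 < q) (l : ℕ) (m : ℤ) (u : ℕ) :
    qpowCoeff q (linCoeff fun m' => q ^ m' - 1) l m u = gaussR q l u * alphaR q m u := by
  have hq0 : q ≠ 0 := by positivity
  induction l generalizing u with
  | zero =>
    rcases u with _ | u
    · simp [qpowCoeff, gaussR_zero_right, alphaR_zero]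
    · simp [qpowCoeff, gaussR_of_lt q (Nat.succ_pos u)]
  | succ l ih =>
    rcases u with _ | u
    · simp [qpowCoeff, qmulCoeff_linCoeff_zero, ih, gaussR_zero_right, alphaR_zero]
    · have hstep : q ^ u * (q ^ (m - u) - 1) = q ^ m - q ^ (u : ℤ) := by
        rw [mul_sub, mul_one, ← zpow_natCast, ← zpow_add₀ hq0, add_sub_cancel]
      rw [qpowCoeff, qmulCoeff_linCoeff_succ, ih, ih, gaussR_pascal hq, alphaR_succ, ← hstep]
      ring

theorem qpow_x_add_qm_sub_one_y_general (q : ℕ) (hq : 2 ≤ q) (m : ℤ) (l u : ℕ) :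
    qpowCoeff (q : ℝ)
        (fun m' i => if i = 0 then 1 else if i = 1 then (q : ℝ) ^ m' - 1 else 0) l m u =
      gaussR (q : ℝ) l u * alphaR (q : ℝ) m u :=
  qpowCoeff_linCoeff_zpow_sub_one (by exact_mod_cast hq) l m u

/-- the coefficient of `y^u x^{l-u}` in `[x + (q^m - 1)y]^{[l]}` equals
`[l,u]_q α(m,u)` for all `0 ≤ u ≤ l`. -/
theorem qpow_x_add_qm_sub_one_y (q : ℕ) (hq : 2 ≤ q) (m : ℤ) (l u : ℕ) (hu : u ≤ l) :
    qpowCoeff (q : ℝ)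
        (fun m' i => if i = 0 then 1 else if i = 1 then (q : ℝ) ^ m' - 1 else 0) l m u =
      gaussR (q : ℝ) l u * alphaR (q : ℝ) m u :=
  qpow_x_add_qm_sub_one_y_general q hq m l u
end

section
/- For all integers 0 ≤ ν ≤ l and every integer m, the ν-th partial q-derivative with respect to x of the polynomial a_l(x,y) = Σ_{u=0}^{l} [l,u]_q α(m,u) y^u x^{l−u} equals β(l,ν) · Σ_{u=0}^{l−ν} [l−ν,u]_q α(m,u) y^u x^{l−ν−u}, and the ν-th partial q-derivative with respect to x of b_l(x,y) = Σ_{u=0}^{l} [l,u]_q (−1)^u q^{σ_u} y^u x^{l−u} equals β(l,ν) · Σ_{u=0}^{l−ν} [l−ν,u]_q (−1)^u q^{σ_u} y^u x^{l−ν−u}. -/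
open Finset

/-- `β(l,0) = 1` and `β(l,ν) = ∏_{i=0}^{ν-1} (q^{l-i} - 1)/(q - 1)`. -/
noncomputable def betaR (q : ℝ) (l ν : ℕ) : ℝ :=
  ∏ i ∈ Finset.range ν, (q ^ (l - i) - 1) / (q - 1)

/-- The partial `q`-derivative with respect to `x` (for `x ≠ 0`):
`f^{(1)}(x,y) = (f(qx,y) - f(x,y)) / ((q-1)x)`. -/
noncomputable def qDeriv (q : ℝ) (f : ℝ → ℝ → ℝ) : ℝ → ℝ → ℝ :=
  fun x y => (f (q * x) y - f x y) / ((q - 1) * x)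

/-!
Both polynomials have the shape `Σ_u [l,u]_q c_u y^u x^{l-u}` for a coefficient sequence `c`
not depending on `l`, and one `q`-derivative maps such a sum for `l = k + 1` to
`(q^{k+1} - 1)/(q - 1)` times the sum for `l = k`. Termwise this is the identity
`[k+1,u]_q (q^{k+1-u} - 1) = (q^{k+1} - 1) [k,u]_q`, the `u = k + 1` term being constant in `x`.
Iterating `ν` times collects the factors into `β(l,ν)`.
-/

noncomputable def qBinomialSum (q : ℝ) (c : ℕ → ℝ) (l : ℕ) : ℝ → ℝ → ℝ :=
  fun x y => ∑ u ∈ range (l + 1), gaussR q l u * c u * y ^ u * x ^ (l - u)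

lemma alphaR_natCast (q : ℝ) (n u : ℕ) : alphaR q n u = ∏ i ∈ range u, (q ^ n - q ^ i) := by
  simp [alphaR, zpow_natCast]

/-- Both sides equal `∏_{i ≤ u} (q^{n+1} - q^i) / q^u`, peeling off the last resp. first factor. -/
lemma alphaR_succ_mul_pow_sub_one {q : ℝ} (hq : q ≠ 0) {n u : ℕ} (hu : u ≤ n) :
    alphaR q (n + 1 : ℕ) u * (q ^ (n + 1 - u) - 1) = (q ^ (n + 1) - 1) * alphaR q n u := by
  obtain ⟨d, rfl⟩ := Nat.exists_eq_add_of_le hu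
  rw [alphaR_natCast, alphaR_natCast, show u + d + 1 - u = d + 1 by omega]
  apply mul_right_cancel₀ (pow_ne_zero u hq)
  have h_last : (∏ i ∈ range u, (q ^ (u + d + 1) - q ^ i)) * (q ^ (d + 1) - 1) * q ^ u
      = ∏ i ∈ range (u + 1), (q ^ (u + d + 1) - q ^ i) := by
    rw [prod_range_succ]; ring
  have h_first : (q ^ (u + d + 1) - 1) * (∏ i ∈ range u, (q ^ (u + d) - q ^ i)) * q ^ u
      = ∏ i ∈ range (u + 1), (q ^ (u + d + 1) - q ^ i) := by
    have h_shift : ∀ i ∈ range u, q ^ (u + d + 1) - q ^ (i + 1) = q * (q ^ (u + d) - q ^ i) :=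
      fun i _ => by ring
    rw [prod_range_succ', prod_congr rfl h_shift, prod_mul_distrib, prod_const, card_range]
    ring
  rw [h_last, h_first]

lemma gaussR_succ_mul_pow_sub_one {q : ℝ} (hq : q ≠ 0) {n u : ℕ} (hu : u ≤ n) :
    gaussR q (n + 1) u * (q ^ (n + 1 - u) - 1) = (q ^ (n + 1) - 1) * gaussR q n u := by
  rw [gaussR, gaussR, div_mul_eq_mul_div, alphaR_succ_mul_pow_sub_one hq hu, mul_div_assoc]

lemma betaR_succ (q : ℝ) (l n : ℕ) :
    betaR q l (n + 1) = betaR q l n * ((q ^ (l - n) - 1) / (q - 1)) :=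
  prod_range_succ _ _

lemma qDeriv_qBinomialSum_succ {q : ℝ} (hq0 : q ≠ 0) (hq1 : q ≠ 1) (c : ℕ → ℝ) (k : ℕ)
    {x : ℝ} (hx : x ≠ 0) (y : ℝ) :
    qDeriv q (qBinomialSum q c (k + 1)) x y
      = (q ^ (k + 1) - 1) / (q - 1) * qBinomialSum q c k x y := by
  have hq1' : q - 1 ≠ 0 := sub_ne_zero.mpr hq1
  simp only [qDeriv, qBinomialSum]
  rw [div_eq_iff (mul_ne_zero hq1' hx), ← sum_sub_distrib, sum_range_succ]
  simp only [Nat.sub_self, pow_zero, mul_one, sub_self, add_zero]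
  rw [show ∀ S : ℝ, (q ^ (k + 1) - 1) / (q - 1) * S * ((q - 1) * x) = (q ^ (k + 1) - 1) * S * x
      from fun S => by field_simp, mul_sum, sum_mul]
  refine sum_congr rfl fun u hu => ?_
  have hu : u ≤ k := Nat.lt_succ_iff.mp (mem_range.mp hu)
  have h_gauss := gaussR_succ_mul_pow_sub_one hq0 hu
  rw [show k + 1 - u = k - u + 1 by omega] at h_gauss ⊢
  linear_combination (c u * y ^ u * x ^ (k - u + 1)) * h_gauss

lemma qDeriv_iterate_qBinomialSum {q : ℝ} (hq0 : q ≠ 0) (hq1 : q ≠ 1) (c : ℕ → ℝ)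
    {l ν : ℕ} (hν : ν ≤ l) {x : ℝ} (hx : x ≠ 0) (y : ℝ) :
    (qDeriv q)^[ν] (qBinomialSum q c l) x y = betaR q l ν * qBinomialSum q c (l - ν) x y := by
  induction ν generalizing x with
  | zero => simp [betaR]
  | succ n ih =>
    obtain ⟨k, hk⟩ : ∃ k, l - n = k + 1 := ⟨l - n - 1, by omega⟩
    have h_step := qDeriv_qBinomialSum_succ hq0 hq1 c k hx y
    rw [qDeriv] at h_step
    rw [Function.iterate_succ_apply', qDeriv, ih (by omega) (mul_ne_zero hq0 hx), ih (by omega) hx,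
      ← mul_sub, mul_div_assoc, hk, h_step, betaR_succ, hk, show l - (n + 1) = k by omega]
    ring

/-- for `0 ≤ ν ≤ l`, the `ν`-th partial `q`-derivative (w.r.t. `x`) of
`a_l(x,y) = Σ_{u=0}^l [l,u]_q α(m,u) y^u x^{l-u}` is
`β(l,ν) Σ_{u=0}^{l-ν} [l-ν,u]_q α(m,u) y^u x^{l-ν-u}`, and the `ν`-th partial
`q`-derivative of `b_l(x,y) = Σ_{u=0}^l [l,u]_q (-1)^u q^{σ_u} y^u x^{l-u}` is
`β(l,ν) Σ_{u=0}^{l-ν} [l-ν,u]_q (-1)^u q^{σ_u} y^u x^{l-ν-u}`. -/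
theorem qDeriv_special_polys (q : ℕ) (hq : 2 ≤ q) (m : ℤ) (l ν : ℕ) (hν : ν ≤ l)
    (x y : ℝ) (hx : x ≠ 0) :
    (qDeriv (q : ℝ))^[ν]
        (fun x' y' => ∑ u ∈ Finset.range (l + 1),
          gaussR (q : ℝ) l u * alphaR (q : ℝ) m u * y' ^ u * x' ^ (l - u)) x y =
      betaR (q : ℝ) l ν * ∑ u ∈ Finset.range (l - ν + 1),
        gaussR (q : ℝ) (l - ν) u * alphaR (q : ℝ) m u * y ^ u * x ^ (l - ν - u) ∧
    (qDeriv (q : ℝ))^[ν]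
        (fun x' y' => ∑ u ∈ Finset.range (l + 1),
          gaussR (q : ℝ) l u * (-1) ^ u * (q : ℝ) ^ (u * (u - 1) / 2) * y' ^ u * x' ^ (l - u)) x y =
      betaR (q : ℝ) l ν * ∑ u ∈ Finset.range (l - ν + 1),
        gaussR (q : ℝ) (l - ν) u * (-1) ^ u * (q : ℝ) ^ (u * (u - 1) / 2) * y ^ u *
          x ^ (l - ν - u) := by
  have hq0 : (q : ℝ) ≠ 0 := by positivity
  have hq1 : (q : ℝ) ≠ 1 := by exact_mod_cast (by omega : q ≠ 1)
  constructor
  · exact qDeriv_iterate_qBinomialSum hq0 hq1 (alphaR q m) hν hx y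
  · have h := qDeriv_iterate_qBinomialSum hq0 hq1
      (fun u => (-1) ^ u * (q : ℝ) ^ (u * (u - 1) / 2)) hν hx y
    unfold qBinomialSum at h
    simpa only [mul_assoc] using h
end

section
/- For 1 ≤ r ≤ m, let v ∈ GF(q^m)^r be any vector with rk(v) = r, and let A_{r,r} denote the number of vectors of rank r in the dual code ⟨v⟩^⊥ = {u ∈ GF(q^m)^r : Σ_{t=0}^{r−1} u_t v_t = 0}. Then A_{r,r} depends only on r (not on the choice of v), and the numbers A_{r,r} satisfy the recursion A_{r,r} = α(m,r−1) − q^{r−1} A_{r−1,r−1} for all 1 ≤ r ≤ m, where A_{0,0} = 1. -/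
open Finset

/-- The rank of a vector `v` over the subfield `K`: the dimension over `K` of the
`K`-linear span of the coordinates of `v`. -/
noncomputable def rk (K : Type*) {F : Type*} [Field K] [Field F] [Algebra K F]
    {ι : Type*} (v : ι → F) : ℕ :=
  Module.finrank K (Submodule.span K (Set.range v))

/-!
Let `v` have full rank `n + 1`. Since `v 0 ≠ 0`, deleting the head coordinate identifies
`⟨v⟩^⊥` with `F^n`: the head of `u ⊥ v` is forced to be `x(p) = -(p ⬝ tail v) / v 0`, where
`p = tail u`. If `p` has full rank `n`, then `u` has full rank iff `x(p) ∉ span p`; otherwise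
`x(p) = ∑ c_t p_t` for a unique `c ∈ K^n`, which says exactly that `p ⊥ tail v + c • v 0`.
Hence `A(v) + ∑_c A(tail v + c • v 0) = α(m, n)`, and every `tail v + c • v 0` again has full
rank `n`. By induction on `n` the count `A` depends only on the length, and the identity
becomes `A_{n+1} + q^n A_n = α(m, n)`.
-/

theorem card_linearIndependent_eq_prod {K V : Type*} [Field K] [AddCommGroup V] [Module K V]
    [Fintype K] [Finite V] (k : ℕ) :
    (Nat.card {s : Fin k → V // LinearIndependent K s} : ℤ) =
      ∏ i ∈ range k, ((Fintype.card K : ℤ) ^ Module.finrank K V - Fintype.card K ^ i) := by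
  by_cases hk : k ≤ Module.finrank K V
  · rw [card_linearIndependent hk, Nat.cast_prod, ← Fin.prod_univ_eq_prod_range]
    refine prod_congr rfl fun i _ => ?_
    rw [Nat.cast_sub (Nat.pow_le_pow_right Fintype.card_pos (by omega))]
    push_cast
    rfl
  · rw [prod_eq_zero (mem_range.2 (not_le.1 hk)) (sub_self _), Nat.cast_eq_zero, Nat.card_eq_zero]
    left
    exact ⟨fun s => hk (by simpa using s.2.fintype_card_le_finrank)⟩

section FullRankDual

open Submodule Set

variable {K F : Type*} [Field K] [Field F] [Algebra K F]

theorem rk_eq_iff_linearIndependent {n : ℕ} (u : Fin n → F) :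
    rk K u = n ↔ LinearIndependent K u := by
  rw [rk, linearIndependent_iff_card_eq_finrank_span, Set.finrank, Fintype.card_fin, eq_comm]

variable (K) in
/-- The number `A_{n,n}` of vectors of rank `n` in `⟨v⟩^⊥`. -/
noncomputable def fullRankDualCount {n : ℕ} (v : Fin n → F) : ℕ :=
  Nat.card {u : Fin n → F // u ⬝ᵥ v = 0 ∧ LinearIndependent K u}

theorem LinearIndependent.tail_add_smul_head {n : ℕ} {v : Fin (n + 1) → F}
    (hv : LinearIndependent K v) (c : Fin n → K) :
    LinearIndependent K (Fin.tail v + (c · • v 0)) := by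
  have h := (linearIndependent_add_smul_iff (c := Fin.cons 0 c) (i := 0) rfl).2 hv
  exact h.comp Fin.succ (Fin.succ_injective n)

noncomputable def orthHead {n : ℕ} (v : Fin (n + 1) → F) (p : Fin n → F) : F :=
  -(p ⬝ᵥ Fin.tail v) / v 0

theorem cons_dotProduct_eq_zero_iff {n : ℕ} {v : Fin (n + 1) → F} (hv : v 0 ≠ 0)
    (x : F) (p : Fin n → F) : Fin.cons x p ⬝ᵥ v = 0 ↔ x = orthHead v p := by
  have hsplit : Fin.cons x p ⬝ᵥ v = x * v 0 + p ⬝ᵥ Fin.tail v := by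
    simp only [dotProduct, Fin.sum_univ_succ, Fin.cons_zero, Fin.cons_succ, Fin.tail]
  rw [hsplit, orthHead, eq_div_iff hv]
  constructor <;> intro h <;> linear_combination h

theorem dotProduct_add_smul_eq_zero_iff {n : ℕ} {v : Fin (n + 1) → F} (hv : v 0 ≠ 0)
    (c : Fin n → K) (p : Fin n → F) :
    p ⬝ᵥ (Fin.tail v + (c · • v 0)) = 0 ↔ ∑ t, c t • p t = orthHead v p := by
  have hsplit : p ⬝ᵥ (Fin.tail v + (c · • v 0)) =
      p ⬝ᵥ Fin.tail v + (∑ t, c t • p t) * v 0 := by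
    simp only [dotProduct, Pi.add_apply, mul_add, sum_add_distrib, sum_mul,
      mul_smul_comm, smul_mul_assoc]
  rw [hsplit, orthHead, eq_div_iff hv]
  constructor <;> intro h <;> linear_combination h

theorem fullRankDualCount_eq_card_not_mem_span {n : ℕ} {v : Fin (n + 1) → F} (hv : v 0 ≠ 0) :
    fullRankDualCount K v =
      Nat.card {p : {p : Fin n → F // LinearIndependent K p} //
        orthHead v p.1 ∉ span K (range p.1)} := by
  have head_eq {u : Fin (n + 1) → F} (hu : u ⬝ᵥ v = 0) : u 0 = orthHead v (Fin.tail u) :=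
    (cons_dotProduct_eq_zero_iff hv _ _).1 (by rwa [Fin.cons_self_tail])
  refine Nat.card_congr
    { toFun := fun u => ⟨⟨Fin.tail u.1, (linearIndependent_finSucc.1 u.2.2).1⟩,
        head_eq u.2.1 ▸ (linearIndependent_finSucc.1 u.2.2).2⟩
      invFun := fun p => ⟨Fin.cons (orthHead v p.1.1) p.1.1,
        (cons_dotProduct_eq_zero_iff hv _ _).2 rfl, linearIndependent_finCons.2 ⟨p.1.2, p.2⟩⟩
      left_inv := fun u => ?_
      right_inv := fun p => by simp }
  ext : 1
  dsimp only
  rw [← head_eq u.2.1, Fin.cons_self_tail]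

variable [Fintype K] [Finite F]

theorem sum_fullRankDualCount_eq_card_mem_span {n : ℕ} {v : Fin (n + 1) → F} (hv : v 0 ≠ 0) :
    ∑ c : Fin n → K, fullRankDualCount K (Fin.tail v + (c · • v 0)) =
      Nat.card {p : {p : Fin n → F // LinearIndependent K p} //
        orthHead v p.1 ∈ span K (range p.1)} := by
  simp only [fullRankDualCount]
  rw [← Nat.card_sigma]
  refine Nat.card_congr (Equiv.ofBijective (fun z => ⟨⟨z.2.1, z.2.2.2⟩,
    (mem_span_range_iff_exists_fun K).2
      ⟨z.1, (dotProduct_add_smul_eq_zero_iff hv _ _).1 z.2.2.1⟩⟩) ⟨?_, fun p => ?_⟩)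
  · rintro ⟨c, u, hu⟩ ⟨c', u', hu'⟩ h
    obtain rfl : u = u' := congrArg (fun p => p.1.1) h
    obtain rfl : c = c' := funext <| Fintype.linearIndependent_iffₛ.1 hu.2 c c' <|
      ((dotProduct_add_smul_eq_zero_iff hv _ _).1 hu.1).trans
        ((dotProduct_add_smul_eq_zero_iff hv _ _).1 hu'.1).symm
    rfl
  · obtain ⟨c, hc⟩ := (mem_span_range_iff_exists_fun K).1 p.2
    exact ⟨⟨c, p.1.1, (dotProduct_add_smul_eq_zero_iff hv _ _).2 hc, p.1.2⟩, rfl⟩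

theorem fullRankDualCount_add_sum {n : ℕ} {v : Fin (n + 1) → F} (hv : v 0 ≠ 0) :
    fullRankDualCount K v + ∑ c : Fin n → K, fullRankDualCount K (Fin.tail v + (c · • v 0)) =
      Nat.card {p : Fin n → F // LinearIndependent K p} := by
  classical
  rw [fullRankDualCount_eq_card_not_mem_span hv, sum_fullRankDualCount_eq_card_mem_span hv,
    add_comm, ← Nat.card_sum]
  exact Nat.card_congr (Equiv.sumCompl _)

theorem fullRankDualCount_eq_of_linearIndependent {n : ℕ} {v w : Fin n → F}
    (hv : LinearIndependent K v) (hw : LinearIndependent K w) :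
    fullRankDualCount K v = fullRankDualCount K w := by
  induction n with
  | zero => rw [Subsingleton.elim v w]
  | succ n ih =>
    have hv' := fullRankDualCount_add_sum (K := K) (hv.ne_zero 0)
    have hw' := fullRankDualCount_add_sum (K := K) (hw.ne_zero 0)
    rw [sum_congr rfl fun c _ => ih (hv.tail_add_smul_head c) (hw.tail_add_smul_head c)] at hv'
    omega

theorem fullRankDualCount_add_card_pow_mul {n : ℕ} {v : Fin (n + 1) → F} {w : Fin n → F}
    (hv : LinearIndependent K v) (hw : LinearIndependent K w) :
    fullRankDualCount K v + Fintype.card K ^ n * fullRankDualCount K w =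
      Nat.card {p : Fin n → F // LinearIndependent K p} := by
  rw [← fullRankDualCount_add_sum (hv.ne_zero 0),
    sum_congr rfl fun c _ => fullRankDualCount_eq_of_linearIndependent (hv.tail_add_smul_head c) hw,
    sum_const, card_univ, Fintype.card_fun, Fintype.card_fin, smul_eq_mul]

end FullRankDual

theorem rank_dual_vector_recursion_general (q m : ℕ)
    (K F : Type*) [Field K] [Field F] [Algebra K F] [Fintype K] [Fintype F]
    (hK : Fintype.card K = q) (hF : Fintype.card F = q ^ m)
    (r : ℕ) (hr1 : 1 ≤ r)
    (v : Fin r → F) (hv : rk K v = r)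
    (w : Fin (r - 1) → F) (hw : rk K w = r - 1) :
    (Nat.card {u : Fin r → F // (∑ t, u t * v t) = 0 ∧ rk K u = r} : ℤ) =
      (∏ i ∈ Finset.range (r - 1), ((q : ℤ) ^ m - (q : ℤ) ^ i)) -
        (q : ℤ) ^ (r - 1) *
          (Nat.card {u : Fin (r - 1) → F // (∑ t, u t * w t) = 0 ∧ rk K u = r - 1} : ℤ) := by
  obtain ⟨n, rfl⟩ : ∃ n, r = n + 1 := ⟨r - 1, by omega⟩
  have count_eq {k : ℕ} (x : Fin k → F) :
      Nat.card {u : Fin k → F // (∑ t, u t * x t) = 0 ∧ rk K u = k} = fullRankDualCount K x :=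
    Nat.card_congr <| Equiv.subtypeEquivRight fun u =>
      and_congr_right fun _ => rk_eq_iff_linearIndependent u
  have finrank_eq : Module.finrank K F = m :=
    Nat.pow_right_injective (hK ▸ Fintype.one_lt_card) <| by
      show q ^ _ = q ^ m
      rw [← hF, ← hK]
      exact Module.card_eq_pow_finrank.symm
  have recursion := fullRankDualCount_add_card_pow_mul
    ((rk_eq_iff_linearIndependent v).1 hv) ((rk_eq_iff_linearIndependent w).1 hw)
  have card_li := card_linearIndependent_eq_prod (K := K) (V := F) n
  rw [← recursion, finrank_eq, hK] at card_li
  rw [count_eq, count_eq]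
  push_cast at card_li ⊢
  linarith

/-- for `1 ≤ r ≤ m` and any `v ∈ GF(q^m)^r` of rank `r`, the number
`A_{r,r}` of vectors of rank `r` in `⟨v⟩^⊥` depends only on `r` and satisfies
`A_{r,r} = α(m,r-1) - q^{r-1} A_{r-1,r-1}`, with `A_{0,0} = 1`
(the count for any vector `w` of rank `r-1` in `GF(q^m)^{r-1}`). -/
theorem rank_dual_vector_recursion (q m : ℕ) (hq : IsPrimePow q) (hm : 0 < m)
    (K F : Type*) [Field K] [Field F] [Algebra K F] [Fintype K] [Fintype F]
    (hK : Fintype.card K = q) (hF : Fintype.card F = q ^ m)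
    (r : ℕ) (hr1 : 1 ≤ r) (hrm : r ≤ m)
    (v : Fin r → F) (hv : rk K v = r)
    (w : Fin (r - 1) → F) (hw : rk K w = r - 1) :
    (Nat.card {u : Fin r → F // (∑ t, u t * v t) = 0 ∧ rk K u = r} : ℤ) =
      (∏ i ∈ Finset.range (r - 1), ((q : ℤ) ^ m - (q : ℤ) ^ i)) -
        (q : ℤ) ^ (r - 1) *
          (Nat.card {u : Fin (r - 1) → F // (∑ t, u t * w t) = 0 ∧ rk K u = r - 1} : ℤ) :=
  rank_dual_vector_recursion_general q m K F hK hF r hr1 v hv w hw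
end

section
/- (Moments of the rank distribution.) Let C be a k-dimensional GF(q^m)-linear subspace of GF(q^m)^n with rank distribution A_i = #{c ∈ C : rk(c) = i}, and let B_j = #{c ∈ C^⊥ : rk(c) = j}. Then for every 0 ≤ ν ≤ n, Σ_{i=0}^{n−ν} [n−i, ν]_q A_i = q^{m(k−ν)} · Σ_{j=0}^{ν} [n−j, n−ν]_q B_j. -/
open Finset

/-!
Both sides count the pairs `(c, U)` with `c ∈ C` and `U` a `ν`-dimensional subspace of `K^n` on
which the `K`-linear map `x ↦ ∑ xₜ cₜ` vanishes. This map has rank `rk c`, so `c` lies in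
`[n - rk c, ν]_q` pairs. For fixed `U` those `c` form `C ∩ U_F^⊥`, where `U_F` is the `F`-span
of `U`, of `F`-dimension `ν`, and a dimension count for the dot product gives
`|C ∩ U_F^⊥| = q^{m(k-ν)} |C^⊥ ∩ U_F|`. Finally `v ∈ U_F` iff `U` contains the `K`-space of the
coordinate vectors `(f(vₜ))ₜ`, `f ∈ Hom_K(F, K)`, whose dimension is `rk v`; by duality the
`ν`-spaces containing a `j`-space are as many as the `(n-ν)`-subspaces of an `(n-j)`-space.
-/

open Module Submodule

attribute [local instance] Fintype.ofFinite

namespace RankMoments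

lemma gaussR_eq_zero_of_lt (q : ℝ) {d u : ℕ} (h : d < u) : gaussR q d u = 0 := by
  rw [gaussR, alphaR, prod_eq_zero (mem_range.2 h) (sub_self _), zero_div]

lemma alphaR_self_ne_zero {q : ℝ} (hq : 1 < q) (r : ℕ) : alphaR q r r ≠ 0 :=
  prod_ne_zero_iff.2 fun i hi =>
    sub_ne_zero.2 (zpow_lt_zpow_right₀ hq (by exact_mod_cast mem_range.1 hi)).ne'

lemma sum_natCard_comm {A B : Type*} [Fintype A] [Fintype B] (P : A → B → Prop) :
    ∑ a, Nat.card {b // P a b} = ∑ b, Nat.card {a // P a b} := by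
  classical
  simp only [Nat.card_eq_fintype_card, Fintype.card_subtype, card_filter]
  exact sum_comm

lemma sum_comp_eq_sum_range_mul_natCard {α : Type*} {p : α → Prop} [Fintype {x // p x}]
    (g : α → ℕ) (f : ℕ → ℝ) (N : ℕ) (hf : ∀ a : {x // p x}, N ≤ g a → f (g a) = 0) :
    ∑ a : {x // p x}, f (g a) = ∑ i ∈ range N, f i * Nat.card {x // p x ∧ g x = i} := by
  classical
  have hfiber (i : ℕ) : Nat.card {x // p x ∧ g x = i} = #{a : {x // p x} | g a = i} := by
    rw [← Nat.card_congr (Equiv.subtypeSubtypeEquivSubtypeInter p (g · = i)),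
      Nat.card_eq_fintype_card, Fintype.card_subtype]
  have hsupp (a : {x // p x}) : f (g a) = ∑ i ∈ range N, if g a = i then f i else 0 := by
    rw [sum_ite_eq]
    split_ifs with h
    · rfl
    · exact hf a (by simpa using h)
  simp_rw [hsupp, hfiber]
  rw [sum_comm]
  refine sum_congr rfl fun i _ => ?_
  rw [← sum_filter, sum_const, nsmul_eq_mul, mul_comm]

lemma natCard_subtype_mem {R M : Type*} [Ring R] [AddCommGroup M] [Module R M]
    (S T : Submodule R M) : Nat.card {c : S // (c : M) ∈ T} = Nat.card ↥(S ⊓ T) :=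
  Nat.card_congr (Equiv.subtypeSubtypeEquivSubtypeInter (· ∈ S) (· ∈ T))

section Grassmannian

variable {K V : Type*} [Field K] [AddCommGroup V] [Module K V] [Finite V]

variable (K V) in
abbrev Gr (r : ℕ) : Type _ := {U : Submodule K V // finrank K U = r}

lemma card_linearIndependent_span_eq {r : ℕ} {U : Submodule K V} (hU : finrank K U = r) :
    Nat.card {s : Fin r → V // LinearIndependent K s ∧ span K (Set.range s) = U} =
      Nat.card {t : Fin r → U // LinearIndependent K t} := by
  refine Nat.card_congr
    { toFun s := ⟨fun i => ⟨s.1 i, s.2.2.le (subset_span (Set.mem_range_self i))⟩,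
        LinearIndependent.of_comp U.subtype s.2.1⟩
      invFun t := ⟨U.subtype ∘ t.1, t.2.map' U.subtype U.ker_subtype, ?_⟩
      left_inv s := rfl
      right_inv t := rfl }
  refine eq_of_le_of_finrank_le (span_le.2 ?_) ?_
  · rintro _ ⟨i, rfl⟩
    exact (t.1 i).2
  · rw [finrank_span_eq_card (t.2.map' U.subtype U.ker_subtype), Fintype.card_fin, hU]

variable [Fintype K]

lemma natCast_card_linearIndependent {r : ℕ} (hr : r ≤ finrank K V) :
    (Nat.card {s : Fin r → V // LinearIndependent K s} : ℝ) =
      alphaR (Fintype.card K) (finrank K V) r := by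
  rw [card_linearIndependent hr, alphaR, ← Fin.prod_univ_eq_prod_range, Nat.cast_prod]
  refine prod_congr rfl fun i _ => ?_
  have : Fintype.card K ^ (i : ℕ) ≤ Fintype.card K ^ finrank K V :=
    Nat.pow_le_pow_right Fintype.card_pos (by omega)
  rw [Nat.cast_sub this]
  push_cast
  rfl

lemma natCast_card_linearIndependent_eq_card_gr_mul (r : ℕ) :
    (Nat.card {s : Fin r → V // LinearIndependent K s} : ℝ) =
      Nat.card (Gr K V r) * alphaR (Fintype.card K) r r := by
  let spanOf (s : {s : Fin r → V // LinearIndependent K s}) : Gr K V r :=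
    ⟨span K (Set.range s.1), by rw [finrank_span_eq_card s.2, Fintype.card_fin]⟩
  have hfiber (U : Gr K V r) :
      (Nat.card {s // spanOf s = U} : ℝ) = alphaR (Fintype.card K) r r := by
    have e : {s // spanOf s = U} ≃
        {s : Fin r → V // LinearIndependent K s ∧ span K (Set.range s) = U.1} :=
      (Equiv.subtypeEquivRight fun _ => Subtype.ext_iff).trans <|
        Equiv.subtypeSubtypeEquivSubtypeInter (fun s : Fin r → V => LinearIndependent K s)
          (fun s => span K (Set.range s) = U.1)
    rw [Nat.card_congr e, card_linearIndependent_span_eq U.2,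
      natCast_card_linearIndependent U.2.ge, U.2]
  have hsigma := Nat.card_congr (Equiv.sigmaFiberEquiv spanOf)
  rw [← hsigma, Nat.card_sigma, Nat.cast_sum, sum_congr rfl fun U _ => hfiber U, sum_const,
    card_univ, nsmul_eq_mul, Nat.card_eq_fintype_card]

lemma natCast_card_gr (r : ℕ) :
    (Nat.card (Gr K V r) : ℝ) = gaussR (Fintype.card K) (finrank K V) r := by
  rcases le_or_gt r (finrank K V) with hr | hr
  · have hq : (1 : ℝ) < Fintype.card K := by exact_mod_cast Fintype.one_lt_card
    rw [gaussR, eq_div_iff (alphaR_self_ne_zero hq r),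
      ← natCast_card_linearIndependent_eq_card_gr_mul, natCast_card_linearIndependent hr]
  · have : IsEmpty (Gr K V r) := ⟨fun U => by have := U.1.finrank_le; omega⟩
    rw [Nat.card_of_isEmpty, Nat.cast_zero, gaussR_eq_zero_of_lt _ hr]

lemma natCast_card_gr_le (r : ℕ) (W : Submodule K V) :
    (Nat.card {U : Gr K V r // U.1 ≤ W} : ℝ) = gaussR (Fintype.card K) (finrank K W) r := by
  let hasFinrank (U : Submodule K V) : Prop := finrank K U = r
  have e : Gr K W r ≃ {U : Gr K V r // U.1 ≤ W} :=
    ((MapSubtype.orderIso W).toEquiv.subtypeEquiv fun U => by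
        rw [← finrank_map_subtype_eq W U]; rfl).trans <|
      (Equiv.subtypeSubtypeEquivSubtypeInter (· ≤ W) hasFinrank).trans <|
        (Equiv.subtypeEquivRight fun _ => and_comm).trans
          (Equiv.subtypeSubtypeEquivSubtypeInter hasFinrank (· ≤ W)).symm
  rw [← Nat.card_congr e, natCast_card_gr]

lemma natCast_card_gr_ge {r : ℕ} (hr : r ≤ finrank K V) (W : Submodule K V) :
    (Nat.card {U : Gr K V r // W ≤ U.1} : ℝ) =
      gaussR (Fintype.card K) (finrank K V - finrank K W) (finrank K V - r) := by
  have : Finite (Dual K V) := Module.finite_of_finite K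
  have hdual (U : Submodule K V) :
      finrank K U.dualAnnihilator = finrank K V - finrank K U := by
    have := Subspace.finrank_add_finrank_dualAnnihilator_eq U
    omega
  have hcond (U : Submodule K V) : finrank K U = r ∧ W ≤ U ↔
      finrank K U.dualAnnihilator = finrank K V - r ∧
        U.dualAnnihilator ≤ W.dualAnnihilator := by
    rw [hdual, Subspace.dualAnnihilator_le_dualAnnihilator_iff]
    have := U.finrank_le
    exact and_congr_left' (by omega)
  have e : {U : Gr K V r // W ≤ U.1} ≃
      {U : Gr K (Dual K V) (finrank K V - r) // U.1 ≤ W.dualAnnihilator} :=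
    (Equiv.subtypeSubtypeEquivSubtypeInter (fun U : Submodule K V => finrank K U = r)
        (W ≤ ·)).trans <|
      ((Subspace.orderIsoFiniteDimensional.toEquiv.trans OrderDual.ofDual).subtypeEquiv
        hcond).trans (Equiv.subtypeSubtypeEquivSubtypeInter _ (· ≤ W.dualAnnihilator)).symm
  rw [Nat.card_congr e, natCast_card_gr_le, hdual]

end Grassmannian

section Orthogonal

variable {K V : Type*} [Field K] [AddCommGroup V] [Module K V]

lemma orthogonal_sup (B : LinearMap.BilinForm K V) (S T : Submodule K V) :
    B.orthogonal (S ⊔ T) = B.orthogonal S ⊓ B.orthogonal T := by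
  refine le_antisymm (le_inf (LinearMap.BilinForm.orthogonal_le le_sup_left)
    (LinearMap.BilinForm.orthogonal_le le_sup_right)) ?_
  rintro v ⟨hS, hT⟩ x hx
  obtain ⟨a, ha, b, hb, rfl⟩ := mem_sup.1 hx
  simp only [map_add, LinearMap.add_apply] at hS hT ⊢
  rw [hS a ha, hT b hb, add_zero]

variable [FiniteDimensional K V] {B : LinearMap.BilinForm K V}

lemma finrank_inf_orthogonal_add (hB : B.Nondegenerate) (hB' : B.IsRefl)
    (C S : Submodule K V) :
    finrank K ↥(C ⊓ B.orthogonal S) + finrank K S =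
      finrank K C + finrank K ↥(B.orthogonal C ⊓ S) := by
  have hsup := finrank_sup_add_finrank_inf_eq C (B.orthogonal S)
  have hperp : B.orthogonal (C ⊔ B.orthogonal S) = B.orthogonal C ⊓ S := by
    rw [orthogonal_sup, LinearMap.BilinForm.orthogonal_orthogonal hB hB']
  have h := LinearMap.BilinForm.finrank_orthogonal hB (C ⊔ B.orthogonal S)
  rw [hperp] at h
  rw [LinearMap.BilinForm.finrank_orthogonal hB] at hsup
  have := (C ⊔ B.orthogonal S).finrank_le
  have := S.finrank_le
  omega

lemma natCard_inf_orthogonal [Finite K] (hB : B.Nondegenerate) (hB' : B.IsRefl)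
    (C S : Submodule K V) :
    (Nat.card ↥(C ⊓ B.orthogonal S) : ℝ) =
      (Nat.card K : ℝ) ^ ((finrank K C : ℤ) - finrank K S) *
        Nat.card ↥(B.orthogonal C ⊓ S) := by
  have hK : (Nat.card K : ℝ) ≠ 0 := by exact_mod_cast Nat.card_pos.ne'
  have h := finrank_inf_orthogonal_add hB hB' C S
  rw [natCard_eq_pow_finrank (K := K),
    natCard_eq_pow_finrank (K := K) (V := ↥(B.orthogonal C ⊓ S))]
  push_cast
  rw [← zpow_natCast, ← zpow_natCast, ← zpow_add₀ hK]
  congr 1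
  omega

end Orthogonal

section ScalarExtension

variable {K F : Type*} [Field K] [Field F] [Algebra K F] {ι : Type*}

variable (K) in
def coordSpace (v : ι → F) : Submodule K (ι → K) :=
  LinearMap.range (LinearMap.pi fun t => Dual.eval K F (v t))

lemma coordSpace_le_iff {v : ι → F} {U : Submodule K (ι → K)} :
    coordSpace K v ≤ U ↔ ∀ f : Dual K F, (fun t => f (v t)) ∈ U :=
  ⟨fun h f => h ⟨f, rfl⟩, by rintro h _ ⟨f, rfl⟩; exact h f⟩

variable (F) in
def scalarExtension (U : Submodule K (ι → K)) : Submodule F (ι → F) :=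
  span F (Pi.algebraMap ι K F '' U)

lemma mem_scalarExtension_iff [FiniteDimensional K F] (v : ι → F) (U : Submodule K (ι → K)) :
    v ∈ scalarExtension F U ↔ coordSpace K v ≤ U := by
  rw [coordSpace_le_iff]
  constructor
  · intro hv
    induction hv using span_induction with
    | mem y hy =>
      obtain ⟨x, hx, rfl⟩ := hy
      intro f
      convert U.smul_mem (f 1) hx using 1
      funext t
      simp [Pi.algebraMap, Algebra.algebraMap_eq_smul_one, mul_comm]
    | zero => intro f; convert U.zero_mem using 1; funext t; simp
    | add y z _ _ hy hz => intro f; convert U.add_mem (hy f) (hz f) using 1; funext t; simp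
    | smul a y _ hy => intro f; exact hy (f ∘ₗ LinearMap.mulLeft K a)
  · intro h
    let e := finBasis K F
    have hv : v = ∑ s, e s • Pi.algebraMap ι K F (fun t => e.coord s (v t)) := by
      funext t
      simp [Pi.algebraMap, mul_comm (e _), ← Algebra.smul_def, e.sum_repr]
    rw [hv]
    exact sum_mem fun s _ => smul_mem _ _ (subset_span ⟨_, h (e.coord s), rfl⟩)

variable [Fintype ι]

variable (K) in
lemma rk_le_card (v : ι → F) : rk K v ≤ Fintype.card ι :=
  finrank_range_le_card v

lemma finrank_coordSpace (v : ι → F) : finrank K (coordSpace K v) = rk K v := by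
  have : (coordSpace K v).map (piEquiv ι K K : (ι → K) →ₗ[K] Dual K (ι → K)) =
      LinearMap.range (piEquiv ι K F v).dualMap := by
    rw [coordSpace, ← LinearMap.range_comp]
    congr 1
    refine LinearMap.ext fun f => LinearMap.ext fun w => ?_
    simp [piEquiv_apply_apply]
  rw [← LinearEquiv.finrank_map_eq (piEquiv ι K K), this,
    LinearMap.finrank_range_dualMap_eq_finrank_range, range_piEquiv]
  rfl

lemma finrank_ker_piEquiv (c : ι → F) :
    finrank K (LinearMap.ker (piEquiv ι K F c)) = Fintype.card ι - rk K c := by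
  have := LinearMap.finrank_range_add_finrank_ker (piEquiv ι K F c)
  rw [range_piEquiv, finrank_fintype_fun_eq_card] at this
  unfold rk
  omega

variable (F ι) in
abbrev dotForm : LinearMap.BilinForm F (ι → F) := dotProductBilin F F

lemma dotForm_nondegenerate : (dotForm F ι).Nondegenerate :=
  ⟨fun v h => dotProduct_eq_zero v h,
    fun w h => dotProduct_eq_zero w fun v => (dotProduct_comm w v).trans (h v)⟩

lemma dotForm_isRefl : (dotForm F ι).IsRefl :=
  fun x y h => (dotProduct_comm y x).trans h

lemma mem_dotForm_orthogonal_iff {S : Submodule F (ι → F)} {v : ι → F} :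
    v ∈ (dotForm F ι).orthogonal S ↔ ∀ c ∈ S, ∑ t, v t * c t = 0 :=
  forall₂_congr fun c _ => by
    change c ⬝ᵥ v = 0 ↔ _
    rw [dotProduct_comm]
    rfl

lemma finrank_scalarExtension (U : Submodule K (ι → K)) :
    finrank F (scalarExtension F U) = finrank K U := by
  let b := finBasis K U
  have hb : LinearIndependent K (U.subtype ∘ b) :=
    b.linearIndependent.map' U.subtype U.ker_subtype
  have hspan : span K (Set.range (U.subtype ∘ b)) = U := by
    rw [Set.range_comp, ← map_span, b.span_eq, Submodule.map_top, range_subtype]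
  have hext :
      scalarExtension F U = span F (Set.range (Pi.algebraMap ι K F ∘ U.subtype ∘ b)) := by
    have : Pi.algebraMap ι K F '' U =
        span K (Set.range (Pi.algebraMap ι K F ∘ U.subtype ∘ b)) := by
      rw [Set.range_comp, ← map_span, hspan, map_coe]
    rw [scalarExtension, this, span_span_of_tower]
  have hbF : LinearIndependent F (Pi.algebraMap ι K F ∘ U.subtype ∘ b) :=
    linearIndependent_algebraMap_comp_iff.2 hb
  rw [hext, finrank_span_eq_card hbF, Fintype.card_fin]

lemma mem_orthogonal_scalarExtension_iff (c : ι → F) (U : Submodule K (ι → K)) :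
    c ∈ (dotForm F ι).orthogonal (scalarExtension F U) ↔
      U ≤ LinearMap.ker (piEquiv ι K F c) := by
  have hdot (x : ι → K) : dotForm F ι (Pi.algebraMap ι K F x) c = piEquiv ι K F c x := by
    simp [piEquiv_apply_apply, dotProduct, Pi.algebraMap, Algebra.smul_def]
  constructor
  · intro h x hx
    rw [LinearMap.mem_ker, ← hdot]
    exact h _ (subset_span ⟨x, hx, rfl⟩)
  · intro h y hy
    have : scalarExtension F U ≤ LinearMap.ker ((dotForm F ι).flip c) := by
      refine span_le.2 ?_
      rintro _ ⟨x, hx, rfl⟩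
      change dotForm F ι (Pi.algebraMap ι K F x) c = 0
      rw [hdot]
      exact h hx
    exact this hy

end ScalarExtension

section Codes

variable {K F : Type*} [Field K] [Field F] [Algebra K F] [Fintype K] [Fintype F]
  {ι : Type*} [Fintype ι]

lemma sum_gaussR_rk_eq_sum_natCard_inf_orthogonal (S : Submodule F (ι → F)) (ν : ℕ) :
    ∑ c : S, gaussR (Fintype.card K) (Fintype.card ι - rk K c.1) ν =
      ∑ U : Gr K (ι → K) ν,
        (Nat.card ↥(S ⊓ (dotForm F ι).orthogonal (scalarExtension F U.1)) : ℝ) := by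
  calc _ = ∑ c : S,
        (Nat.card {U : Gr K (ι → K) ν // U.1 ≤ LinearMap.ker (piEquiv ι K F c.1)} : ℝ) := by
        simp_rw [natCast_card_gr_le, finrank_ker_piEquiv]
    _ = ∑ U : Gr K (ι → K) ν,
        (Nat.card {c : S // U.1 ≤ LinearMap.ker (piEquiv ι K F c.1)} : ℝ) := by
        exact_mod_cast sum_natCard_comm fun (c : S) (U : Gr K (ι → K) ν) =>
          U.1 ≤ LinearMap.ker (piEquiv ι K F c.1)
    _ = _ := by
        simp_rw [← mem_orthogonal_scalarExtension_iff, natCard_subtype_mem]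

lemma sum_gaussR_rk_eq_sum_natCard_inf_scalarExtension (S : Submodule F (ι → F)) {ν : ℕ}
    (hν : ν ≤ Fintype.card ι) :
    ∑ v : S, gaussR (Fintype.card K) (Fintype.card ι - rk K v.1) (Fintype.card ι - ν) =
      ∑ U : Gr K (ι → K) ν, (Nat.card ↥(S ⊓ scalarExtension F U.1) : ℝ) := by
  have hdim : finrank K (ι → K) = Fintype.card ι := finrank_fintype_fun_eq_card K
  calc _ = ∑ v : S, (Nat.card {U : Gr K (ι → K) ν // coordSpace K v.1 ≤ U.1} : ℝ) := by
        simp_rw [natCast_card_gr_ge (hdim ▸ hν), hdim, finrank_coordSpace]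
    _ = ∑ U : Gr K (ι → K) ν, (Nat.card {v : S // coordSpace K v.1 ≤ U.1} : ℝ) := by
        exact_mod_cast sum_natCard_comm fun (v : S) (U : Gr K (ι → K) ν) =>
          coordSpace K v.1 ≤ U.1
    _ = _ := by
        simp_rw [← mem_scalarExtension_iff, natCard_subtype_mem]

end Codes

end RankMoments

open RankMoments

theorem rank_distribution_moments_general (q m n k : ℕ)
    (K F : Type*) [Field K] [Field F] [Algebra K F] [Fintype K] [Fintype F]
    (hK : Fintype.card K = q) (hF : Fintype.card F = q ^ m)
    (C : Submodule F (Fin n → F)) (hCk : Module.finrank F C = k)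
    (ν : ℕ) (hν : ν ≤ n) :
    ∑ i ∈ Finset.range (n - ν + 1),
        gaussR (q : ℝ) (n - i) ν * (Nat.card {c : Fin n → F // c ∈ C ∧ rk K c = i} : ℝ) =
      (q : ℝ) ^ ((m : ℤ) * ((k : ℤ) - (ν : ℤ))) *
        ∑ j ∈ Finset.range (ν + 1),
          gaussR (q : ℝ) (n - j) (n - ν) *
            (Nat.card {v : Fin n → F //
              (∀ c ∈ C, ∑ t, v t * c t = 0) ∧ rk K v = j} : ℝ) := by
  subst hK hCk
  set D := (dotForm F (Fin n)).orthogonal C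
  have hrk (v : Fin n → F) : rk K v ≤ n := by simpa using rk_le_card K v
  have hFq : (Nat.card F : ℝ) = (Fintype.card K : ℝ) ^ m := by
    rw [Nat.card_eq_fintype_card, hF]; push_cast; rfl
  have hD (j : ℕ) : Nat.card {v // v ∈ D ∧ rk K v = j} =
      Nat.card {v : Fin n → F // (∀ c ∈ C, ∑ t, v t * c t = 0) ∧ rk K v = j} :=
    Nat.card_congr (Equiv.subtypeEquivRight fun v => and_congr_left' mem_dotForm_orthogonal_iff)
  have hL := sum_gaussR_rk_eq_sum_natCard_inf_orthogonal (K := K) C ν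
  have hR := sum_gaussR_rk_eq_sum_natCard_inf_scalarExtension (K := K) D (by simpa using hν)
  simp only [Fintype.card_fin] at hL hR
  calc _ = ∑ c : C, gaussR (Fintype.card K) (n - rk K c.1) ν := by
        rw [sum_comp_eq_sum_range_mul_natCard _ (fun i => gaussR _ (n - i) ν) (n - ν + 1)
          fun c _ => gaussR_eq_zero_of_lt _ (by have := hrk c; omega)]
    _ = (Nat.card F : ℝ) ^ ((finrank F C : ℤ) - ν) *
          ∑ v : D, gaussR (Fintype.card K) (n - rk K v.1) (n - ν) := by
        rw [hL, hR, mul_sum]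
        refine sum_congr rfl fun U _ => ?_
        rw [natCard_inf_orthogonal dotForm_nondegenerate dotForm_isRefl,
          finrank_scalarExtension, U.2]
    _ = _ := by
        rw [sum_comp_eq_sum_range_mul_natCard _ (fun j => gaussR _ (n - j) (n - ν)) (ν + 1)
          fun v _ => gaussR_eq_zero_of_lt _ (by have := hrk v; omega),
          hFq, ← zpow_natCast, ← zpow_mul]
        simp_rw [hD]

/-- moments of the rank distribution: if `C` is a `k`-dimensional linear
code in `GF(q^m)^n` with rank distribution `A_i`, and `B_j` is the rank distribution of
its dual code, then for every `0 ≤ ν ≤ n`,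
`Σ_{i=0}^{n-ν} [n-i,ν]_q A_i = q^{m(k-ν)} Σ_{j=0}^ν [n-j,n-ν]_q B_j`. -/
theorem rank_distribution_moments (q m n k : ℕ) (hq : IsPrimePow q) (hm : 0 < m) (hn : 0 < n)
    (K F : Type*) [Field K] [Field F] [Algebra K F] [Fintype K] [Fintype F]
    (hK : Fintype.card K = q) (hF : Fintype.card F = q ^ m)
    (C : Submodule F (Fin n → F)) (hCk : Module.finrank F C = k)
    (ν : ℕ) (hν : ν ≤ n) :
    ∑ i ∈ Finset.range (n - ν + 1),
        gaussR (q : ℝ) (n - i) ν * (Nat.card {c : Fin n → F // c ∈ C ∧ rk K c = i} : ℝ) =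
      (q : ℝ) ^ ((m : ℤ) * ((k : ℤ) - (ν : ℤ))) *
        ∑ j ∈ Finset.range (ν + 1),
          gaussR (q : ℝ) (n - j) (n - ν) *
            (Nat.card {v : Fin n → F //
              (∀ c ∈ C, ∑ t, v t * c t = 0) ∧ rk K v = j} : ℝ) :=
  rank_distribution_moments_general q m n k K F hK hF C hCk ν hν
end

section
/- (MacWilliams identity for the Hamming metric.) Let C be a k-dimensional GF(q^m)-linear subspace of GF(q^m)^n with Hamming weight distribution A_i = #{c ∈ C : w_H(c) = i}, and let B_j = #{c ∈ C^⊥ : w_H(c) = j} be the Hamming weight distribution of its dual code. Then for all real numbers x and y, Σ_{j=0}^{n} B_j y^j x^{n−j} = q^{−mk} · Σ_{i=0}^{n} A_i (x−y)^i (x+(q^m−1)y)^{n−i}. -/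
/-!
Poisson summation over the code: for a nontrivial additive character `χ` of `F`, the sum of
`χ (v ⬝ᵥ c)` over `c ∈ C` is `|C|` when `v ∈ C^⊥` and `0` otherwise, so summing the Fourier
transform of `f v = y ^ wH v * x ^ (n - wH v)` over `C` gives `|C|` times the sum of `f` over
`C^⊥`. Both `χ (v ⬝ᵥ u)` and `f v` factor over the coordinates, so the transform of `f` at `u` is
a product of one-dimensional sums, each equal to `x + (q^m - 1) y` or `x - y` according as `u t`
vanishes or not. Real `x, y` are embedded in `ℂ`, where such a character exists.
-/

open Finset

/-- The Hamming weight of a vector: the number of nonzero coordinates. -/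
def wH {n : ℕ} {F : Type*} [DecidableEq F] [Zero F] (v : Fin n → F) : ℕ :=
  (Finset.univ.filter fun t => v t ≠ 0).card

namespace AddChar

lemma map_sum_eq_prod {ι A M : Type*} [AddCommMonoid A] [CommMonoid M] (ψ : AddChar A M)
    (s : Finset ι) (f : ι → A) : ψ (∑ i ∈ s, f i) = ∏ i ∈ s, ψ (f i) := by
  induction s using Finset.cons_induction with
  | empty => simp
  | cons a s ha ih => rw [sum_cons, prod_cons, map_add_eq_mul, ih]

lemma sum_apply_comp_eq_zero {A B R : Type*} [AddGroup A] [Fintype A] [AddGroup B] [CommRing R]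
    [IsDomain R] {ψ : AddChar B R} (hψ : ψ ≠ 1) {f : A →+ B} (hf : Function.Surjective f) :
    ∑ a, ψ (f a) = 0 := by
  refine sum_eq_zero_of_ne_one (ψ := ψ.compAddMonoidHom f) fun h ↦ hψ ?_
  exact compAddMonoidHom_injective_left f hf (h.trans (by ext; simp))

end AddChar

section Orthogonality

variable {ι F E : Type*} [Fintype ι] [Field F] [CommRing E] [IsDomain E]
  {χ : AddChar F E} (C : Submodule F (ι → F)) [Fintype C]

lemma sum_addChar_dotProduct_eq_zero (hχ : χ ≠ 1) {v : ι → F} (hv : ∃ c ∈ C, v ⬝ᵥ c ≠ 0) :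
    ∑ c : C, χ (v ⬝ᵥ c) = 0 := by
  let ℓ : C →ₗ[F] F := (dotProductBilin F F v).domRestrict C
  have hℓ : ℓ ≠ 0 := by
    obtain ⟨c, hc, hvc⟩ := hv
    exact fun h ↦ hvc (LinearMap.congr_fun h ⟨c, hc⟩)
  exact AddChar.sum_apply_comp_eq_zero hχ (f := ℓ.toAddMonoidHom)
    (LinearMap.surjective_of_ne_zero hℓ)

lemma sum_addChar_dotProduct (hχ : χ ≠ 1) (v : ι → F) [Decidable (∀ c ∈ C, v ⬝ᵥ c = 0)] :
    ∑ c : C, χ (v ⬝ᵥ c) = if ∀ c ∈ C, v ⬝ᵥ c = 0 then (Fintype.card C : E) else 0 := by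
  split_ifs with hv
  · simp [fun c : C ↦ hv c c.2]
  · push Not at hv
    exact sum_addChar_dotProduct_eq_zero C hχ hv

lemma sum_fourier_eq_card_mul_sum_dual [DecidableEq ι] [Fintype F] (hχ : χ ≠ 1) (f : (ι → F) → E)
    [DecidablePred fun v : ι → F ↦ ∀ c ∈ C, v ⬝ᵥ c = 0] :
    ∑ c : C, ∑ v, χ (v ⬝ᵥ c) * f v =
      Fintype.card C * ∑ v with ∀ c ∈ C, v ⬝ᵥ c = 0, f v := by
  simp_rw [sum_comm (γ := C), ← sum_mul, sum_addChar_dotProduct C hχ, ite_mul, zero_mul,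
    ← sum_filter, mul_sum]

end Orthogonality

section Weight

variable {n : ℕ} {F : Type*} [DecidableEq F] [Zero F]

lemma wH_le (v : Fin n → F) : wH v ≤ n :=
  (card_filter_le _ _).trans_eq (card_fin n)

lemma prod_ite_eq_zero_eq_pow_wH {M : Type*} [CommMonoid M] (v : Fin n → F) (a b : M) :
    ∏ t, (if v t = 0 then a else b) = b ^ wH v * a ^ (n - wH v) := by
  have hzero : #{t | v t = 0} = n - wH v :=
    eq_tsub_of_add_eq ((card_filter_add_card_filter_not _).trans (card_fin n))
  rw [prod_ite, prod_const, prod_const, hzero, mul_comm]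
  rfl

def hammingWeightEnumerator {E : Type*} [CommSemiring E] (s : Finset (Fin n → F)) (X Y : E) : E :=
  ∑ v ∈ s, Y ^ wH v * X ^ (n - wH v)

lemma hammingWeightEnumerator_eq_sum_range {E : Type*} [CommSemiring E] (s : Finset (Fin n → F))
    (X Y : E) :
    hammingWeightEnumerator s X Y =
      ∑ j ∈ range (n + 1), (#{v ∈ s | wH v = j} : E) * Y ^ j * X ^ (n - j) := by
  rw [hammingWeightEnumerator, ← sum_fiberwise_of_maps_to (t := range (n + 1))
    fun v _ ↦ mem_range_succ_iff.mpr (wH_le v)]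
  refine sum_congr rfl fun j _ ↦ ?_
  rw [sum_congr rfl fun v hv ↦ by rw [(mem_filter.mp hv).2], sum_const, nsmul_eq_mul, mul_assoc]

lemma hammingWeightEnumerator_filter_eq_sum_range [Fintype F] {E : Type*} [CommSemiring E]
    (p : (Fin n → F) → Prop) [DecidablePred p] (X Y : E) :
    hammingWeightEnumerator {v | p v} X Y =
      ∑ j ∈ range (n + 1), (Nat.card {v // p v ∧ wH v = j} : E) * Y ^ j * X ^ (n - j) := by
  simp [hammingWeightEnumerator_eq_sum_range, filter_filter, Nat.card_eq_fintype_card,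
    Fintype.card_subtype]

end Weight

section MacWilliams

variable {n : ℕ} {F E : Type*} [Field F] [Fintype F] [DecidableEq F] [CommRing E] [IsDomain E]
  {χ : AddChar F E}

lemma sum_addChar_mul_ite (hχ : χ.IsPrimitive) (b : F) (X Y : E) :
    ∑ a, χ (a * b) * (if a = 0 then X else Y) =
      if b = 0 then X + (Fintype.card F - 1) * Y else X - Y := by
  have hsplit : ∀ a : F, χ (a * b) * (if a = 0 then X else Y) =
      χ (a * b) * Y + if a = 0 then X - Y else 0 := by
    intro a
    split_ifs with ha <;> simp [ha]
  simp_rw [hsplit, sum_add_distrib, ← sum_mul, AddChar.sum_mulShift b hχ, sum_ite_eq',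
    if_pos (mem_univ _)]
  split_ifs <;> ring

lemma sum_addChar_dotProduct_mul_weight (hχ : χ.IsPrimitive) (u : Fin n → F) (X Y : E) :
    ∑ v, χ (v ⬝ᵥ u) * (Y ^ wH v * X ^ (n - wH v)) =
      (X - Y) ^ wH u * (X + (Fintype.card F - 1) * Y) ^ (n - wH u) := by
  have hfactor : ∀ v : Fin n → F, χ (v ⬝ᵥ u) * (Y ^ wH v * X ^ (n - wH v)) =
      ∏ t, χ (v t * u t) * (if v t = 0 then X else Y) := by
    intro v
    rw [prod_mul_distrib, dotProduct, AddChar.map_sum_eq_prod, prod_ite_eq_zero_eq_pow_wH]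
  simp_rw [hfactor, ← Fintype.prod_sum fun t a ↦ χ (a * u t) * (if a = 0 then X else Y),
    sum_addChar_mul_ite hχ]
  exact prod_ite_eq_zero_eq_pow_wH u _ _

open Classical in
theorem card_mul_hammingWeightEnumerator_dual (hχ : χ.IsPrimitive) (C : Submodule F (Fin n → F))
    (X Y : E) :
    Nat.card C * hammingWeightEnumerator {v | ∀ c ∈ C, v ⬝ᵥ c = 0} X Y =
      hammingWeightEnumerator {c | c ∈ C} (X + (Fintype.card F - 1) * Y) (X - Y) := by
  have hχ1 : χ ≠ 1 := by simpa using hχ one_ne_zero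
  rw [hammingWeightEnumerator, Nat.card_eq_fintype_card, ← sum_fourier_eq_card_mul_sum_dual C hχ1,
    hammingWeightEnumerator]
  simp_rw [sum_addChar_dotProduct_mul_weight hχ]
  symm
  apply sum_subtype
  simp

end MacWilliams

theorem macwilliams_hamming_metric_general (q m n k : ℕ)
    (F : Type*) [Field F] [Fintype F] [DecidableEq F] (hF : Fintype.card F = q ^ m)
    (C : Submodule F (Fin n → F)) (hCk : Module.finrank F C = k)
    (x y : ℝ) :
    ∑ j ∈ Finset.range (n + 1),
        (Nat.card {v : Fin n → F // (∀ c ∈ C, ∑ t, v t * c t = 0) ∧ wH v = j} : ℝ) *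
          y ^ j * x ^ (n - j) =
      ((q : ℝ) ^ (m * k))⁻¹ *
        ∑ i ∈ Finset.range (n + 1),
          (Nat.card {c : Fin n → F // c ∈ C ∧ wH c = i} : ℝ) *
            (x - y) ^ i * (x + ((q : ℝ) ^ m - 1) * y) ^ (n - i) := by
  have hC : Nat.card C = q ^ (m * k) := by
    rw [Module.natCard_eq_pow_finrank (K := F), hCk, Nat.card_eq_fintype_card, hF, pow_mul]
  have key := card_mul_hammingWeightEnumerator_dual
    (AddChar.FiniteField.primitiveChar_to_Complex_isPrimitive F) C (x : ℂ) y
  rw [hammingWeightEnumerator_filter_eq_sum_range, hammingWeightEnumerator_filter_eq_sum_range,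
    hC, hF] at key
  have hq : (q : ℂ) ^ (m * k) ≠ 0 := by exact_mod_cast hC ▸ Nat.card_pos.ne'
  apply Complex.ofReal_injective
  push_cast
  rw [eq_inv_mul_iff_mul_eq₀ hq]
  exact_mod_cast key

/-- MacWilliams identity for the Hamming metric: if `C` is a
`k`-dimensional linear code in `GF(q^m)^n` with Hamming weight distribution `A_i`, and
`B_j` is the Hamming weight distribution of its dual code, then for all real `x, y`,
`Σ_{j=0}^n B_j y^j x^{n-j} = q^{-mk} Σ_{i=0}^n A_i (x-y)^i (x+(q^m-1)y)^{n-i}`. -/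
theorem macwilliams_hamming_metric (q m n k : ℕ) (hq : IsPrimePow q)
    (hm : 0 < m) (hn : 0 < n)
    (F : Type*) [Field F] [Fintype F] [DecidableEq F] (hF : Fintype.card F = q ^ m)
    (C : Submodule F (Fin n → F)) (hCk : Module.finrank F C = k)
    (x y : ℝ) :
    ∑ j ∈ Finset.range (n + 1),
        (Nat.card {v : Fin n → F // (∀ c ∈ C, ∑ t, v t * c t = 0) ∧ wH v = j} : ℝ) *
          y ^ j * x ^ (n - j) =
      ((q : ℝ) ^ (m * k))⁻¹ *
        ∑ i ∈ Finset.range (n + 1),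
          (Nat.card {c : Fin n → F // c ∈ C ∧ wH c = i} : ℝ) *
            (x - y) ^ i * (x + ((q : ℝ) ^ m - 1) * y) ^ (n - i) :=
  macwilliams_hamming_metric_general q m n k F hF C hCk x y
end
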